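/- arXiv:2503.02148 — 7 statements merged into one kernel-verified Lean document; each statement's English description precedes it below -/
import Mathlib

section
/- For any semigroup S, the congruence generated by the primary conjugacy relation ∼_p^1 (where s ∼_p^1 t iff s = pr and t = rp for some p,r ∈ S^1) equals ∼_s. -/
/-!
`∼ₛ` is a congruence containing `∼ₚ¹`. Conversely, `pr ∼ₚ¹ rp` makes the quotient of `S` by any
congruence containing `∼ₚ¹` commutative, so two products of permuted lists of elements of `S¹`
have the same image there.
-/

/-- `s ∼ₛ¹ t`: `s = p₁⋯pₙ` and `t = p_{f(1)}⋯p_{f(n)}` for some `p_i ∈ S¹` and a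
permutation `f` of `{1,…,n}` (encoded as a list permutation). -/
def SimS1 {S : Type*} [Semigroup S] (s t : S) : Prop :=
  ∃ l l' : List (WithOne S), l.Perm l' ∧ (s : WithOne S) = l.prod ∧ (t : WithOne S) = l'.prod

/-- `∼ₛ`: the transitive closure of `∼ₛ¹`. -/
def SimS {S : Type*} [Semigroup S] : S → S → Prop := Relation.TransGen SimS1

/-- Primary conjugacy: `s ∼ₚ¹ t` iff `s = pr` and `t = rp` for some `p, r ∈ S¹`. -/
def SimP1 {S : Type*} [Semigroup S] (s t : S) : Prop :=
  ∃ p r : WithOne S, (s : WithOne S) = p * r ∧ (t : WithOne S) = r * p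

section

variable {S : Type*} [Semigroup S]

namespace SimS1

theorem refl (s : S) : SimS1 s s :=
  ⟨[(s : WithOne S)], [(s : WithOne S)], List.Perm.refl _, by simp, by simp⟩

theorem symm {s t : S} (h : SimS1 s t) : SimS1 t s :=
  let ⟨l, l', hp, hs, ht⟩ := h
  ⟨l', l, hp.symm, ht, hs⟩

theorem mul {a b c d : S} (hac : SimS1 a c) (hbd : SimS1 b d) : SimS1 (a * b) (c * d) := by
  obtain ⟨l₁, l₁', hp₁, ha, hc⟩ := hac
  obtain ⟨l₂, l₂', hp₂, hb, hd⟩ := hbd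
  exact ⟨l₁ ++ l₂, l₁' ++ l₂', hp₁.append hp₂,
    by rw [WithOne.coe_mul, ha, hb, List.prod_append],
    by rw [WithOne.coe_mul, hc, hd, List.prod_append]⟩

theorem of_simP1 {s t : S} (h : SimP1 s t) : SimS1 s t := by
  obtain ⟨p, r, hs, ht⟩ := h
  exact ⟨[p, r], [r, p], List.Perm.swap r p [], by simpa using hs, by simpa using ht⟩

theorem con_of_mul_comm (c : Con S) (hc : ∀ a b : S, c (a * b) (b * a)) {s t : S}
    (h : SimS1 s t) : c s t := by
  obtain ⟨l, l', hp, hs, ht⟩ := h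
  let f : WithOne S →* WithOne c.Quotient := WithOne.mapMulHom c.mkMulHom
  have hcomm : ∀ x y : WithOne S, Commute (f x) (f y) := by
    intro x y
    induction x using WithOne.recOneCoe with
    | one => rw [map_one]; exact Commute.one_left _
    | coe a =>
      induction y using WithOne.recOneCoe with
      | one => rw [map_one]; exact Commute.one_right _
      | coe b => exact congrArg WithOne.coe ((Con.eq c).mpr (hc a b))
  have hprod : (l.map f).prod = (l'.map f).prod :=
    (hp.map f).prod_eq' (List.pairwise_map.mpr (List.pairwise_of_forall hcomm))
  rw [← map_list_prod, ← map_list_prod, ← hs, ← ht] at hprod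
  exact (Con.eq c).mp (WithOne.coe_injective hprod)

end SimS1

theorem SimS.con_of_mul_comm (c : Con S) (hc : ∀ a b : S, c (a * b) (b * a)) {s t : S}
    (h : SimS s t) : c s t := by
  induction h with
  | single h => exact SimS1.con_of_mul_comm c hc h
  | tail _ h ih => exact c.trans ih (SimS1.con_of_mul_comm c hc h)

def simSCon : Con S where
  r := SimS
  iseqv :=
    { refl := fun s => .single (SimS1.refl s)
      symm := fun {s t} h =>
        Relation.TransGen.mono (fun _ _ => SimS1.symm) _ _ (Relation.TransGen.swap t s h)
      trans := Relation.TransGen.trans }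
  mul' {_ c b _} hac hbd :=
    (Relation.TransGen.lift (· * b) (fun _ _ h => SimS1.mul h (SimS1.refl b)) _ _ hac).trans
      (Relation.TransGen.lift (c * ·) (fun _ _ h => SimS1.mul (SimS1.refl c) h) _ _ hbd)

theorem conGen_simP1_mul_comm (a b : S) : conGen SimP1 (a * b) (b * a) :=
  ConGen.Rel.of _ _ ⟨a, b, WithOne.coe_mul a b, WithOne.coe_mul b a⟩

end

/-- The congruence generated by `∼ₚ¹` equals `∼ₛ`. -/
theorem conGen_simP1_eq_simS {S : Type*} [Semigroup S] :
    ∀ s t : S, conGen SimP1 s t ↔ SimS s t := by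
  intro s t
  constructor
  · exact fun h => (Con.conGen_le (c := simSCon)).mpr (fun _ _ h => .single (.of_simP1 h)) h
  · exact SimS.con_of_mul_comm _ conGen_simP1_mul_comm
end

section
/- In any semigroup S, if s ∼_s^1 t, then sⁿ ∼_s^1 tⁿ for all positive integers n. -/
/-- `spow s n = s^(n+1)`: the `(n+1)`-st power of `s` in a semigroup. -/
def spow {S : Type*} [Semigroup S] (s : S) : ℕ → S
  | 0 => s
  | n + 1 => spow s n * s

/-- If `s ∼ₛ¹ t` then `sⁿ ∼ₛ¹ tⁿ` for all positive integers `n`. -/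
theorem simS1_pow {S : Type*} [Semigroup S] (s t : S) (h : SimS1 s t) :
    ∀ n : ℕ, SimS1 (spow s n) (spow t n) := by
  intro n
  induction n with
  | zero => exact h
  | succ n ih =>
    obtain ⟨l, l', hp, hs, ht⟩ := ih
    obtain ⟨m, m', hq, hs', ht'⟩ := h
    exact ⟨l ++ m, l' ++ m', hp.append hq,
      by simp [spow, WithOne.coe_mul, hs, hs'],
      by simp [spow, WithOne.coe_mul, ht, ht']⟩
end

section
/- In an inverse semigroup S with natural partial order ≤, if s ≤ t and t ∼_s t', then there exists s' ∈ S with s' ≤ t' and s ∼_s s'. -/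
lemma simS1_mul_right {S : Type*} [Semigroup S] {a b : S} (e : S) (h : SimS1 a b) :
    SimS1 (a * e) (b * e) := by
  obtain ⟨l, l', hp, ha, hb⟩ := h
  refine ⟨l ++ [(e : WithOne S)], l' ++ [(e : WithOne S)], hp.append_right _, ?_, ?_⟩ <;>
    simp [List.prod_append, ← ha, ← hb]

lemma simS_mul_right {S : Type*} [Semigroup S] {a b : S} (e : S) (h : SimS a b) :
    SimS (a * e) (b * e) := by
  induction h with
  | single h => exact Relation.TransGen.single (simS1_mul_right e h)
  | tail _ h ih => exact ih.tail (simS1_mul_right e h)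

/-- In an inverse semigroup with natural partial order (`s ≤ t` iff `s = t * e` for an
idempotent `e`): if `s ≤ t` and `t ∼ₛ t'`, then there is `s' ≤ t'` with `s ∼ₛ s'`. -/
theorem inverse_semigroup_simS_le {S : Type*} [Semigroup S] (inv : S → S)
    (h₁ : ∀ s : S, s * inv s * s = s) (h₂ : ∀ s : S, inv s * s * inv s = inv s)
    (huniq : ∀ s y : S, s * y * s = s → y * s * y = y → y = inv s)
    (s t t' : S) (hle : ∃ e : S, e * e = e ∧ s = t * e) (h : SimS t t') :
    ∃ s' : S, (∃ e : S, e * e = e ∧ s' = t' * e) ∧ SimS s s' := by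
  obtain ⟨e, he, rfl⟩ := hle
  exact ⟨t' * e, ⟨e, he, rfl⟩, simS_mul_right e h⟩
end

section
/- In any semigroup S, the transitive closure of the relation ∼_*^1 (where s ∼_*^1 t iff s = p_1 p_2 p_3 and t = p_1 p_3 p_2 for some p_1,p_2,p_3 ∈ S^1) equals ∼_s. -/
/-- `s ∼*¹ t`: `s = p₁p₂p₃` and `t = p₁p₃p₂` for some `p₁,p₂,p₃ ∈ S¹`. -/
def SimStar1 {S : Type*} [Semigroup S] (s t : S) : Prop :=
  ∃ p₁ p₂ p₃ : WithOne S, (s : WithOne S) = p₁ * p₂ * p₃ ∧ p₁ * p₃ * p₂ = (t : WithOne S)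

/-!
Each `∼*¹`-step is the `∼ₛ¹`-step that transposes the last two of three factors. Conversely, a
permutation of `p₁ ⋯ pₙ` is a composite of adjacent transpositions, and an adjacent transposition
takes two `∼*¹`-steps: `x (y w) ↦ (y w) x ↦ y (x w)`. These steps live in `S¹`; they stay in `S`
because a product in `S¹` equals `1` only if every factor does.
-/

open Relation

/-- The relation `∼*¹` on a monoid: `SimStar1 s t` is `SwapStep (s : WithOne S) t`. -/
def SwapStep {M : Type*} [Monoid M] (a b : M) : Prop :=
  ∃ p₁ p₂ p₃ : M, a = p₁ * p₂ * p₃ ∧ p₁ * p₃ * p₂ = b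

namespace SwapStep

variable {M : Type*} [Monoid M]

theorem mul_left (x : M) {a b : M} (h : SwapStep a b) : SwapStep (x * a) (x * b) := by
  obtain ⟨p₁, p₂, p₃, rfl, rfl⟩ := h
  exact ⟨x * p₁, p₂, p₃, by simp only [mul_assoc], by simp only [mul_assoc]⟩

theorem reflTransGen_mul_left_comm (x y w : M) :
    ReflTransGen SwapStep (x * (y * w)) (y * (x * w)) := by
  have rotate : SwapStep (x * (y * w)) (y * w * x) := ⟨1, x, y * w, by simp, by simp⟩
  have swap_tail : SwapStep (y * w * x) (y * (x * w)) := ⟨y, w, x, rfl, by simp only [mul_assoc]⟩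
  exact .head rotate (.single swap_tail)

theorem reflTransGen_prod_of_perm {l l' : List M} (h : l.Perm l') :
    ReflTransGen SwapStep l.prod l'.prod := by
  induction h with
  | nil => exact .refl
  | cons x _ ih => simpa only [List.prod_cons] using ih.lift (x * ·) fun _ _ => mul_left x
  | swap x y l => simpa only [List.prod_cons] using reflTransGen_mul_left_comm y x l.prod
  | trans _ _ ih₁ ih₂ => exact ih₁.trans ih₂

end SwapStep

section Semigroup

variable {S : Type*} [Semigroup S]

theorem WithOne.mul_eq_one_iff {a b : WithOne S} : a * b = 1 ↔ a = 1 ∧ b = 1 := by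
  refine ⟨fun h => ?_, fun ⟨ha, hb⟩ => by rw [ha, hb, one_mul]⟩
  induction a using WithOne.cases_on <;> induction b using WithOne.cases_on
  all_goals simp_all [← WithOne.coe_mul]

theorem SwapStep.exists_coe_of_coe {s : S} {b : WithOne S} (h : SwapStep (s : WithOne S) b) :
    ∃ t : S, (t : WithOne S) = b := by
  obtain ⟨p₁, p₂, p₃, hs, rfl⟩ := h
  refine WithOne.ne_one_iff_exists.mp fun h => WithOne.coe_ne_one (a := s) ?_
  simp only [WithOne.mul_eq_one_iff] at h
  simp [hs, h]

theorem reflTransGen_simStar1_of_swapStep {s t : S}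
    (h : ReflTransGen SwapStep (s : WithOne S) t) : ReflTransGen SimStar1 s t := by
  generalize hs : (s : WithOne S) = a at h
  induction h using ReflTransGen.head_induction_on generalizing s with
  | refl => rw [WithOne.coe_inj.mp hs]
  | head hac _ ih =>
    subst hs
    obtain ⟨u, rfl⟩ := hac.exists_coe_of_coe
    exact .head hac (ih rfl)

theorem simStar1_refl (s : S) : SimStar1 s s :=
  ⟨s, 1, 1, by simp, by simp⟩

theorem SimStar1.simS1 {s t : S} (h : SimStar1 s t) : SimS1 s t := by
  obtain ⟨p₁, p₂, p₃, hs, ht⟩ := h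
  exact ⟨[p₁, p₂, p₃], [p₁, p₃, p₂], .cons p₁ (.swap p₃ p₂ []),
    by simp [hs, mul_assoc], by simp [← ht, mul_assoc]⟩

theorem SimS1.transGen_simStar1 {s t : S} (h : SimS1 s t) : TransGen SimStar1 s t := by
  obtain ⟨l, l', hl, hs, ht⟩ := h
  have steps := SwapStep.reflTransGen_prod_of_perm hl
  rw [← hs, ← ht] at steps
  rcases reflTransGen_iff_eq_or_transGen.mp (reflTransGen_simStar1_of_swapStep steps) with rfl | h
  · exact .single (simStar1_refl t)
  · exact h

end Semigroup

/-- The transitive closure of `∼*¹` equals `∼ₛ`. -/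
theorem transGen_simStar1_eq_simS {S : Type*} [Semigroup S] :
    ∀ s t : S, Relation.TransGen SimStar1 s t ↔ SimS s t := fun _ _ =>
  ⟨TransGen.mono (fun _ _ => SimStar1.simS1) _ _,
    TransGen.closed (fun _ _ => SimS1.transGen_simStar1) _ _⟩
end

section
/- Let S be a semigroup and T ⊆ S a left ideal. Then the closure T̄ of T under ∼_s is a two-sided ideal of S. -/
lemma simS1_mul_left {S : Type*} [Semigroup S] {a b : S} (s : S) (h : SimS1 a b) :
    SimS1 (s * a) (s * b) := by
  obtain ⟨l, l', hp, ha, hb⟩ := h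
  exact ⟨(s : WithOne S) :: l, (s : WithOne S) :: l', hp.cons _,
    by simp [WithOne.coe_mul, ha], by simp [WithOne.coe_mul, hb]⟩

lemma simS1_comm {S : Type*} [Semigroup S] (a b : S) : SimS1 (a * b) (b * a) :=
  ⟨[(a : WithOne S), b], [(b : WithOne S), a], List.Perm.swap _ _ _,
    by simp [WithOne.coe_mul], by simp [WithOne.coe_mul]⟩

lemma simS_mul_left {S : Type*} [Semigroup S] {a b : S} (s : S) (h : SimS a b) :
    SimS (s * a) (s * b) := by
  induction h with
  | single h => exact Relation.TransGen.single (simS1_mul_left s h)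
  | tail _ h ih => exact ih.tail (simS1_mul_left s h)

/-- The `∼ₛ`-closure of a left ideal is a two-sided ideal. -/
theorem simS_closure_left_ideal_two_sided {S : Type*} [Semigroup S] (T : Set S)
    (hT : ∀ s t : S, t ∈ T → s * t ∈ T) :
    ∀ s : S, ∀ a ∈ {x : S | ∃ t ∈ T, SimS x t},
      s * a ∈ {x : S | ∃ t ∈ T, SimS x t} ∧ a * s ∈ {x : S | ∃ t ∈ T, SimS x t} := by
  rintro s a ⟨t, htT, hst⟩
  have h1 : SimS (s * a) (s * t) := simS_mul_left s hst
  refine ⟨⟨s * t, hT s t htT, h1⟩, ⟨s * t, hT s t htT, ?_⟩⟩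
  exact (Relation.TransGen.single (simS1_comm a s)).trans h1
end

section
/- In the free semigroup on a set Ω with |Ω| ≥ 2, the relation ∼_s is strictly larger than ∼_p (the transitive closure of primary conjugacy): for distinct letters α, β, α²β² ∼_s αβαβ but α²β² is not ∼_p-related to αβαβ. -/
/-- `∼ₚ`: the transitive closure of `∼ₚ¹`. -/
def SimP {S : Type*} [Semigroup S] : S → S → Prop := Relation.TransGen SimP1

/-!
A permutation of factors can swap the two middle letters of `α α β β`, so `α²β² ∼ₛ αβαβ`.
On the other hand `∼ₚ¹` only rotates the underlying word (`pr ↦ rp`), so `∼ₚ` relates a word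
only to its rotations, and no rotation of `ααββ` is `αβαβ`.
-/

theorem simS1_mul_mul_mul_comm {S : Type*} [Semigroup S] (a b c d : S) :
    SimS1 (a * b * (c * d)) (a * c * (b * d)) :=
  ⟨[a, b, c, d], [a, c, b, d], (List.Perm.swap (c : WithOne S) b [d]).cons _,
    by simp [mul_assoc], by simp [mul_assoc]⟩

section Rotation

variable {S Ω : Type*} [Semigroup S] (φ : S →ₙ* FreeMonoid Ω)

theorem SimP1.isRotated_toList {s t : S} (h : SimP1 s t) :
    (φ s).toList ~r (φ t).toList := by
  obtain ⟨p, r, hs, ht⟩ := h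
  have hs' := congrArg (WithOne.lift φ) hs
  have ht' := congrArg (WithOne.lift φ) ht
  simp only [WithOne.lift_coe, map_mul] at hs' ht'
  rw [hs', ht', FreeMonoid.toList_mul, FreeMonoid.toList_mul]
  exact List.isRotated_append

theorem SimP.isRotated_toList {s t : S} (h : SimP s t) :
    (φ s).toList ~r (φ t).toList := by
  induction h with
  | single h => exact h.isRotated_toList φ
  | tail _ h ih => exact ih.trans (h.isRotated_toList φ)

end Rotation

theorem List.not_isRotated_aabb_abab {Ω : Type*} {α β : Ω} (hne : α ≠ β) :
    ¬ [α, α, β, β] ~r [α, β, α, β] := by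
  rw [← List.mem_cyclicPermutations_iff]
  simp [List.cyclicPermutations, hne]

/-- In the free semigroup on `Ω` with distinct letters `α ≠ β`:
`α²β² ∼ₛ αβαβ` but not `α²β² ∼ₚ αβαβ`. -/
theorem free_semigroup_simS_strictly_larger {Ω : Type*} (α β : Ω) (hne : α ≠ β) :
    SimS (FreeSemigroup.of α * FreeSemigroup.of α * (FreeSemigroup.of β * FreeSemigroup.of β))
        (FreeSemigroup.of α * FreeSemigroup.of β * (FreeSemigroup.of α * FreeSemigroup.of β)) ∧
      ¬ SimP
        (FreeSemigroup.of α * FreeSemigroup.of α * (FreeSemigroup.of β * FreeSemigroup.of β))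
        (FreeSemigroup.of α * FreeSemigroup.of β * (FreeSemigroup.of α * FreeSemigroup.of β)) := by
  refine ⟨.single (simS1_mul_mul_mul_comm _ _ _ _), fun h => ?_⟩
  have hrot := h.isRotated_toList FreeSemigroup.toFreeMonoid
  simp only [map_mul, FreeSemigroup.toFreeMonoid_of, FreeMonoid.toList_mul,
    FreeMonoid.toList_of] at hrot
  exact List.not_isRotated_aabb_abab hne hrot
end

section
/- Let Ω be an infinite set. Then there exist s,t in the monoid T(Ω) of all functions Ω → Ω, with s ∘ t = id, such that every element of T(Ω) can be written as s ∘ q ∘ t for some permutation q of Ω. -/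
open Classical in
/-- For an infinite set `Ω` there are `s, t : Ω → Ω` with `s ∘ t = id` such that every
self-map of `Ω` is of the form `s ∘ q ∘ t` for a permutation `q`. -/
theorem full_transformation_monoid_generation {Ω : Type*} [Infinite Ω] :
    ∃ s t : Ω → Ω, s ∘ t = id ∧ ∀ p : Ω → Ω, ∃ q : Equiv.Perm Ω, p = s ∘ q ∘ t := by
  have hcard : Nonempty (Ω ≃ (Ω ⊕ (Ω × Ω))) := by
    rw [← Cardinal.eq]
    simp only [Cardinal.mk_sum, Cardinal.mk_prod, Cardinal.lift_id]
    rw [Cardinal.mul_eq_self (Cardinal.aleph0_le_mk Ω),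
      Cardinal.add_eq_self (Cardinal.aleph0_le_mk Ω)]
  obtain ⟨E⟩ := hcard
  refine ⟨fun z => Sum.elim id Prod.fst (E z), fun x => E.symm (Sum.inl x), ?_, ?_⟩
  · funext x; simp
  · intro p
    set f : (Ω ⊕ (Ω × Ω)) → (Ω ⊕ (Ω × Ω)) := fun z =>
      match z with
      | Sum.inl x => Sum.inr (p x, x)
      | Sum.inr (y, x) => if y = p x then Sum.inl x else Sum.inr (y, x) with hf
    have hinv : ∀ z, f (f z) = z := by
      rintro (x | ⟨y, x⟩)
      · simp [hf]
      · by_cases h : y = p x <;> simp [hf, h]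
    set q0 : Equiv.Perm (Ω ⊕ (Ω × Ω)) := ⟨f, f, hinv, hinv⟩ with hq0
    refine ⟨(E.trans q0).trans E.symm, ?_⟩
    funext x
    simp [hq0, hf]
end
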